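/- For any string x of length n ≥ 2, the number of primitively rooted squares that are prefixes of x is at most log_φ(n), where φ = (1+√5)/2 is the golden ratio. Consequently, the number of occurrences of primitively rooted squares starting at any fixed position of a string of length n is at most log_φ(n). -/
import Mathlib


/-- `listPow x k` is the `k`-th power `xᵏ` of the string `x`. -/
def listPow {α : Type*} (x : List α) (k : ℕ) : List α := (List.replicate k x).flatten

/-- A string is primitive if it is not a proper power. -/
def IsPrimitiveWord {α : Type*} (w : List α) : Prop :=
  ¬ ∃ (x : List α) (k : ℕ), 2 ≤ k ∧ w = listPow x k

section Aux

variable {α β : Type*}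

set_option linter.unusedVariables false

/-- Weak Fine–Wilf: two periods `a`, `b` on `[0,L)` with `a + b ≤ L` give period `gcd a b`. -/
theorem fine_wilf : ∀ s a b L : ℕ, a + b ≤ s → ∀ f : ℕ → β, 0 < a → 0 < b → a + b ≤ L →
    (∀ i, i + a < L → f i = f (i + a)) → (∀ i, i + b < L → f i = f (i + b)) →
    ∀ i, i + Nat.gcd a b < L → f i = f (i + Nat.gcd a b) := by
  intro s
  induction s with
  | zero => intro a b L hs f ha hb; omega
  | succ s ih =>
    intro a b L hs f ha hb hL Ha Hb i hi
    rcases lt_trichotomy a b with hab | hab | hab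
    · -- a < b, replace b by b - a, L by L - a
      have hc : 0 < b - a := by omega
      have key : ∀ j, j + Nat.gcd a (b - a) < L - a → f j = f (j + Nat.gcd a (b - a)) := by
        refine ih a (b - a) (L - a) (by omega) f ha hc (by omega)
          (fun j hj => Ha j (by omega)) ?_
        intro j hj
        have h1 : f j = f (j + b) := Hb j (by omega)
        have h2 : f (j + (b - a)) = f (j + (b - a) + a) := Ha _ (by omega)
        have : j + (b - a) + a = j + b := by omega
        rw [h1, ← this] at *
        rw [h2]
      have hg : Nat.gcd a (b - a) = Nat.gcd a b := Nat.gcd_sub_self_right (le_of_lt hab)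
      rw [hg] at key
      set g := Nat.gcd a b with hgdef
      have hgb : g ∣ b - a := hg ▸ Nat.gcd_dvd_right a (b - a)
      have hgle : g ≤ b - a := Nat.le_of_dvd hc hgb
      by_cases hcase : i + g < L - a
      · exact key i hcase
      · have hia : a ≤ i := by omega
        have e1 : f (i - a) = f i := by
          have := Ha (i - a) (by omega)
          rwa [Nat.sub_add_cancel hia] at this
        have e2 : f (i - a) = f (i - a + g) := key (i - a) (by omega)
        have e3 : f (i - a + g) = f (i - a + g + a) := Ha _ (by omega)
        have : i - a + g + a = i + g := by omega
        rw [← e1, e2, e3, this]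
    · subst hab
      rw [Nat.gcd_self] at hi ⊢
      exact Ha i hi
    · -- symmetric: b < a
      have hc : 0 < a - b := by omega
      have key : ∀ j, j + Nat.gcd b (a - b) < L - b → f j = f (j + Nat.gcd b (a - b)) := by
        refine ih b (a - b) (L - b) (by omega) f hb hc (by omega)
          (fun j hj => Hb j (by omega)) ?_
        intro j hj
        have h1 : f j = f (j + a) := Ha j (by omega)
        have h2 : f (j + (a - b)) = f (j + (a - b) + b) := Hb _ (by omega)
        have : j + (a - b) + b = j + a := by omega
        rw [h1, ← this] at *
        rw [h2]
      have hg : Nat.gcd b (a - b) = Nat.gcd b a := Nat.gcd_sub_self_right (le_of_lt hab)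
      rw [hg, Nat.gcd_comm b a] at key
      set g := Nat.gcd a b with hgdef
      have hgb : g ∣ a - b := by
        have := Nat.gcd_dvd_right b (a - b)
        rwa [hg, Nat.gcd_comm b a] at this
      have hgle : g ≤ a - b := Nat.le_of_dvd hc hgb
      by_cases hcase : i + g < L - b
      · exact key i hcase
      · have hia : b ≤ i := by omega
        have e1 : f (i - b) = f i := by
          have := Hb (i - b) (by omega)
          rwa [Nat.sub_add_cancel hia] at this
        have e2 : f (i - b) = f (i - b + g) := key (i - b) (by omega)
        have e3 : f (i - b + g) = f (i - b + g + b) := Hb _ (by omega)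
        have : i - b + g + b = i + g := by omega
        rw [← e1, e2, e3, this]

/-- everywhere-periods are closed under gcd -/
theorem gcd_shift : ∀ s d t : ℕ, d + t ≤ s → ∀ g : ℕ → β, 0 < d → 0 < t →
    (∀ i, g i = g (i + d)) → (∀ i, g i = g (i + t)) →
    ∀ i, g i = g (i + Nat.gcd d t) := by
  intro s
  induction s with
  | zero => intro d t hs g hd ht; omega
  | succ s ih =>
    intro d t hs g hd ht Hd Ht i
    rcases lt_trichotomy d t with h | h | h
    · have key := ih d (t - d) (by omega) g hd (by omega) Hd
        (fun j => by have h1 := Ht j; have h2 := Hd (j + (t - d));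
                     rw [show j + (t - d) + d = j + t by omega] at h2; rw [h1, ← h2])
      rw [Nat.gcd_sub_self_right h.le] at key
      exact key i
    · subst h; rw [Nat.gcd_self]; exact Hd i
    · have key := ih t (d - t) (by omega) g ht (by omega) Ht
        (fun j => by have h1 := Hd j; have h2 := Ht (j + (d - t));
                     rw [show j + (d - t) + t = j + d by omega] at h2; rw [h1, ← h2])
      rw [Nat.gcd_sub_self_right h.le, Nat.gcd_comm] at key
      exact key i

theorem listPow_zero (x : List α) : listPow x 0 = [] := rfl

theorem listPow_succ (x : List α) (k : ℕ) : listPow x (k + 1) = x ++ listPow x k := by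
  simp [listPow, List.replicate_succ]

theorem length_listPow (x : List α) (k : ℕ) : (listPow x k).length = k * x.length := by
  induction k with
  | zero => simp [listPow]
  | succ k ih => rw [listPow_succ]; simp [ih]; ring

theorem getElem?_listPow (x : List α) (k i : ℕ) (hi : i < k * x.length) :
    (listPow x k)[i]? = x[i % x.length]? := by
  induction k generalizing i with
  | zero => omega
  | succ k ih =>
    rw [listPow_succ]
    by_cases hc : i < x.length
    · rw [List.getElem?_append, if_pos hc, Nat.mod_eq_of_lt hc]
    · push_neg at hc
      rw [List.getElem?_append, if_neg (by omega),
        ih (i - x.length) (by rw [Nat.succ_mul] at hi; omega)]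
      congr 1
      conv_rhs => rw [show i = i - x.length + x.length by omega]
      rw [Nat.add_mod_right]

theorem period_mod' (f : ℕ → β) (d L : ℕ) (hd : 0 < d)
    (h : ∀ i, i + d < L → f i = f (i + d)) : ∀ i, i < L → f i = f (i % d) := by
  intro i
  induction i using Nat.strong_induction_on with
  | _ i ih =>
    intro hi
    by_cases hc : i < d
    · rw [Nat.mod_eq_of_lt hc]
    · push_neg at hc
      have h1 : f (i - d) = f (i - d + d) := h (i - d) (by omega)
      rw [Nat.sub_add_cancel hc] at h1
      have h2 : f (i - d) = f ((i - d) % d) := ih (i - d) (by omega) (by omega)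
      have h3 : (i - d) % d = i % d := by
        conv_rhs => rw [show i = i - d + d by omega]
        rw [Nat.add_mod_right]
      rw [← h1, h2, h3]

/-- A word with a full period `G` properly dividing its length is not primitive. -/
theorem not_primitive_of_period (y : List α) (G : ℕ) (hG : 0 < G) (hGlt : G < y.length)
    (hdvd : G ∣ y.length)
    (h : ∀ i, i + G < y.length → y[i]? = y[i + G]?) : ¬ IsPrimitiveWord y := by
  intro hprim
  apply hprim
  refine ⟨y.take G, y.length / G, ?_, ?_⟩
  · have := Nat.div_mul_cancel hdvd
    rcases Nat.lt_or_ge (y.length / G) 2 with h2 | h2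
    · interval_cases h : y.length / G <;> omega
    · exact h2
  · have hlen : (y.take G).length = G := by
      rw [List.length_take]; omega
    have hmul : y.length / G * (y.take G).length = y.length := by
      rw [hlen]; exact Nat.div_mul_cancel hdvd
    have hmod : ∀ i, i < y.length → y[i]? = y[i % G]? :=
      period_mod' (fun i => y[i]?) G y.length hG h
    apply List.ext_getElem?
    intro i
    by_cases hi : i < y.length
    · rw [getElem?_listPow _ _ _ (by rw [hlen, Nat.div_mul_cancel hdvd]; exact hi)]
      rw [hlen, hmod i hi, List.getElem?_take, if_pos (Nat.mod_lt i hG)]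
    · push_neg at hi
      rw [List.getElem?_eq_none (by omega), List.getElem?_eq_none]
      rw [length_listPow, hlen, Nat.div_mul_cancel hdvd]
      omega

/-- The three-squares lemma, at the level of positions: if `f` has square prefixes with
root lengths `p < q < r` and the root of length `p` has no proper period dividing it
(primitivity), then `p + q ≤ r`. -/
theorem three_squares (f : ℕ → β) (p q r : ℕ)
    (hp : 0 < p) (hpq : p < q) (hqr : q < r)
    (Pp : ∀ i, i < p → f i = f (i + p))
    (Pq : ∀ i, i < q → f i = f (i + q))
    (Pr : ∀ i, i < r → f i = f (i + r))
    (hu : ¬ ∃ G, 0 < G ∧ G < p ∧ G ∣ p ∧ ∀ i, i + G < p → f i = f (i + G)) :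
    p + q ≤ r := by
  by_contra hcon
  push_neg at hcon
  set s := r - q with hs
  set t := q - p with ht
  set d := p - s with hd
  have hs1 : 1 ≤ s := by omega
  have hsp : s < p := by omega
  have ht1 : 1 ≤ t := by omega
  have hd1 : 1 ≤ d := by omega
  have hsd : s + d = p := by omega
  -- v = f[0,q) has full period s
  have V : ∀ j, j + s < q → f j = f (j + s) := by
    intro j hj
    have h1 : f j = f (j + r) := Pr j (by omega)
    have h2 : f (j + s) = f (j + s + q) := Pq (j + s) (by omega)
    rw [show j + s + q = j + r by omega] at h2
    exact h1.trans h2.symm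
  by_cases hcase : s + p ≤ q
  · -- Case A
    have perS : ∀ j, j + s < p → f j = f (j + s) := fun j hj => V j (by omega)
    have perD : ∀ i, i + d < p → f i = f (i + d) := by
      intro i hi
      have hV : f (i + d) = f (i + d + s) := V (i + d) (by omega)
      have hP : f i = f (i + p) := Pp i (by omega)
      rw [show i + p = i + d + s by omega] at hP
      exact hP.trans hV.symm
    have perG := fine_wilf (s + d) s d p le_rfl f (by omega) (by omega) (by omega) perS perD
    exact hu ⟨Nat.gcd s d, Nat.gcd_pos_of_pos_left d (by omega), by
        have := Nat.le_of_dvd (by omega : 0 < s) (Nat.gcd_dvd_left s d); omega,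
      by rw [← hsd]; exact Nat.dvd_add (Nat.gcd_dvd_left s d) (Nat.gcd_dvd_right s d), perG⟩
  · -- Case B : q < s + p, so t < s and q < 2p
    push_neg at hcase
    have htlt : t < s := by omega
    have Ut : ∀ j, j + t < p → f j = f (j + t) := by
      intro j hj
      have h1 : f j = f (j + q) := Pq j (by omega)
      have h2 : f (j + t) = f (j + t + p) := Pp (j + t) (by omega)
      rw [show j + t + p = j + q by omega] at h2
      exact h1.trans h2.symm
    have hmod : ∀ i, i < p → f i = f (i % t) := period_mod' f t p (by omega) Ut
    have hg_t : ∀ i, (fun i => f (i % t)) i = (fun i => f (i % t)) (i + t) := by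
      intro i; simp only [Nat.add_mod_right]
    have hg_d : ∀ i, (fun i => f (i % t)) i = (fun i => f (i % t)) (i + d) := by
      intro i
      show f (i % t) = f ((i + d) % t)
      have h0 : i % t < t := Nat.mod_lt _ (by omega)
      have h1 : f (i % t) = f (i % t + d) := by
        have hV : f (i % t + d) = f (i % t + d + s) := V (i % t + d) (by omega)
        have hP : f (i % t) = f (i % t + p) := Pp (i % t) (by omega)
        rw [show i % t + p = i % t + d + s by omega] at hP
        exact hP.trans hV.symm
      have h2 : f (i % t + d) = f ((i % t + d) % t) := hmod _ (by omega)
      have h3 : (i % t + d) % t = (i + d) % t := by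
        conv_rhs => rw [Nat.add_mod]
        rw [Nat.add_mod (i % t) d, Nat.mod_mod_of_dvd i dvd_rfl]
      rw [h1, h2, h3]
    have hg_gcd := gcd_shift (d + t) d t le_rfl (fun i => f (i % t)) (by omega) (by omega)
      hg_d hg_t
    set h := Nat.gcd d t with hh
    have hhd : h ≤ d := Nat.le_of_dvd (by omega) (Nat.gcd_dvd_left d t)
    have hh1 : 0 < h := Nat.gcd_pos_of_pos_left t (by omega)
    have perH : ∀ i, i + h < p → f i = f (i + h) := by
      intro i hi
      calc f i = f (i % t) := hmod i (by omega)
        _ = f ((i + h) % t) := hg_gcd i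
        _ = f (i + h) := (hmod (i + h) (by omega)).symm
    have perS : ∀ j, j + s < p → f j = f (j + s) := fun j hj => V j (by omega)
    have perG := fine_wilf (h + s) h s p le_rfl f (by omega) (by omega) (by omega) perH perS
    refine hu ⟨Nat.gcd h s, Nat.gcd_pos_of_pos_left s (by omega), by
        have := Nat.le_of_dvd (by omega : 0 < s) (Nat.gcd_dvd_right h s); omega, ?_, perG⟩
    rw [← hsd]
    exact Nat.dvd_add (Nat.gcd_dvd_right h s)
      ((Nat.gcd_dvd_left h s).trans (show h ∣ d from Nat.gcd_dvd_left d t))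

noncomputable def phi : ℝ := (1 + Real.sqrt 5) / 2

theorem sqrt5_lt : Real.sqrt 5 ≤ 3 := by
  nlinarith [Real.sq_sqrt (by norm_num : (5:ℝ) ≥ 0), Real.sqrt_nonneg 5]

theorem sqrt5_gt : 2 ≤ Real.sqrt 5 := by
  nlinarith [Real.sq_sqrt (by norm_num : (5:ℝ) ≥ 0), Real.sqrt_nonneg 5]

theorem one_lt_phi0 : 1 < phi := by unfold phi; nlinarith [sqrt5_gt]

theorem phi_le_two0 : phi ≤ 2 := by unfold phi; nlinarith [sqrt5_lt]

theorem phi_sq : phi ^ 2 = phi + 1 := by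
  unfold phi
  have := Real.sq_sqrt (by norm_num : (5:ℝ) ≥ 0)
  ring_nf
  nlinarith [this]

theorem phi_fib0 : ∀ k, phi ^ k ≤ (Nat.fib (k + 2) : ℝ) := by
  intro k
  induction k using Nat.strong_induction_on with
  | _ k ih =>
    match k with
    | 0 => simp
    | 1 => simpa [Nat.fib] using phi_le_two0
    | (k + 2) =>
      have h1 := ih k (by omega)
      have h2 := ih (k + 1) (by omega)
      have : phi ^ (k + 2) = phi ^ (k + 1) + phi ^ k := by
        have : phi ^ (k + 2) = phi ^ k * phi ^ 2 := by ring
        rw [this, phi_sq]; ring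
      rw [this, show k + 2 + 2 = (k + 2) + 2 by rfl, Nat.fib_add_two]
      push_cast
      have e : ((Nat.fib (k + 2 + 1) : ℝ)) = (Nat.fib (k + 1 + 2) : ℝ) := by norm_num
      linarith [h1, h2, e]

theorem one_lt_phi : 1 < (1 + Real.sqrt 5) / 2 := one_lt_phi0
theorem phi_le_two : (1 + Real.sqrt 5) / 2 ≤ 2 := phi_le_two0
theorem phi_fib : ∀ k, ((1 + Real.sqrt 5) / 2) ^ k ≤ (Nat.fib (k + 2) : ℝ) := phi_fib0

/-- periods from a square prefix -/
theorem period_of_sq_prefix {α : Type*} (y : List α) (p : ℕ) (hlen : 2 * p ≤ y.length)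
    (h : y.take p ++ y.take p <+: y) : ∀ i, i < p → y[i]? = y[i + p]? := by
  intro i hi
  have hul : (y.take p).length = p := by rw [List.length_take]; omega
  obtain ⟨rest, hrest⟩ := h
  conv_lhs => rw [← hrest]
  conv_rhs => rw [← hrest]
  rw [List.getElem?_append, if_pos (by simp [hul]; omega),
    List.getElem?_append, if_pos (by omega),
    List.getElem?_append, if_pos (by simp [hul]; omega),
    List.getElem?_append, if_neg (by omega), hul]
  congr 1
  omega

/-- primitivity transfer to the position level -/
theorem prim_no_period {α : Type*} (y : List α) (p : ℕ) (hp : 0 < p) (hlen : p ≤ y.length)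
    (hprim : IsPrimitiveWord (y.take p)) :
    ¬ ∃ G, 0 < G ∧ G < p ∧ G ∣ p ∧ ∀ i, i + G < p → y[i]? = y[i + G]? := by
  rintro ⟨G, hG1, hG2, hG3, hper⟩
  have hul : (y.take p).length = p := by rw [List.length_take]; omega
  refine not_primitive_of_period (y.take p) G hG1 (by omega) (by rw [hul]; exact hG3) ?_ hprim
  intro i hi
  rw [hul] at hi
  rw [List.getElem?_take, if_pos (by omega), List.getElem?_take, if_pos (by omega)]
  exact hper i hi

open scoped Classical in
theorem main_count {α : Type*} (y : List α) (n : ℕ) (hn : 2 ≤ n) (hyn : y.length ≤ n) :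
    (((Finset.Icc 1 n).filter fun p =>
        2 * p ≤ y.length ∧ IsPrimitiveWord (y.take p) ∧ (y.take p ++ y.take p) <+: y).card : ℝ)
      ≤ Real.logb ((1 + Real.sqrt 5) / 2) n := by
  set S := (Finset.Icc 1 n).filter fun p =>
      2 * p ≤ y.length ∧ IsPrimitiveWord (y.take p) ∧ (y.take p ++ y.take p) <+: y with hS
  have hmem : ∀ p ∈ S, 1 ≤ p ∧ 2 * p ≤ y.length ∧ IsPrimitiveWord (y.take p) ∧
      (y.take p ++ y.take p) <+: y := by
    intro p hp
    rw [hS, Finset.mem_filter, Finset.mem_Icc] at hp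
    tauto
  set m := S.card with hm
  have hn1 : (1:ℝ) ≤ (n:ℝ) := by exact_mod_cast Nat.one_le_of_lt hn
  rcases Nat.eq_zero_or_pos m with hm0 | hm1
  · rw [hm0]
    simpa using Real.logb_nonneg one_lt_phi hn1
  -- the increasing enumeration of S
  set e := S.orderIsoOfFin hm.symm with he
  have hmono : ∀ (a b : Fin m), a < b → ((e a : ℕ) < (e b : ℕ)) := by
    intro a b hab
    exact e.strictMono hab
  have hesmem : ∀ a : Fin m, (e a : ℕ) ∈ S := fun a => (e a).2
  have key : ∀ j, ∀ hj : j < m, Nat.fib (j + 2) ≤ (e ⟨j, hj⟩ : ℕ) := by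
    intro j
    induction j using Nat.strong_induction_on with
    | _ j ih =>
      intro hj
      match j, hj with
      | 0, hj =>
        have := (hmem _ (hesmem ⟨0, hj⟩)).1
        simpa [Nat.fib] using this
      | 1, hj =>
        have h0 := (hmem _ (hesmem ⟨0, by omega⟩)).1
        have hlt := hmono ⟨0, by omega⟩ ⟨1, hj⟩ (by simp)
        have : Nat.fib (1 + 2) = 2 := by decide
        omega
      | (j + 2), hj =>
        have hja : j < m := by omega
        have hjb : j + 1 < m := by omega
        set p := (e ⟨j, hja⟩ : ℕ)
        set q := (e ⟨j + 1, hjb⟩ : ℕ)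
        set r := (e ⟨j + 2, hj⟩ : ℕ)
        have hp := hmem _ (hesmem ⟨j, hja⟩)
        have hq := hmem _ (hesmem ⟨j + 1, hjb⟩)
        have hr := hmem _ (hesmem ⟨j + 2, hj⟩)
        have hpq : p < q := hmono _ _ (by simp)
        have hqr : q < r := hmono _ _ (by simp [Fin.lt_def])
        have h3 : p + q ≤ r := by
          refine three_squares (fun i => y[i]?) p q r (by omega) hpq hqr
            (period_of_sq_prefix y p hp.2.1 hp.2.2.2)
            (period_of_sq_prefix y q hq.2.1 hq.2.2.2)
            (period_of_sq_prefix y r hr.2.1 hr.2.2.2)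
            (prim_no_period y p (by omega) (by omega) hp.2.2.1)
        have f1 := ih j (by omega) hja
        have f2 := ih (j + 1) (by omega) hjb
        have h4 : Nat.fib (j + 2 + 2) = Nat.fib (j + 2) + Nat.fib (j + 3) := by
          rw [Nat.fib_add_two]
        have h5 : Nat.fib (j + 1 + 2) = Nat.fib (j + 3) := rfl
        omega
  -- bound n from below
  have hlast : Nat.fib (m + 1) ≤ (e ⟨m - 1, by omega⟩ : ℕ) := by
    have := key (m - 1) (by omega)
    rwa [show m - 1 + 2 = m + 1 by omega] at this
  have h2n : 2 * Nat.fib (m + 1) ≤ n := by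
    have := (hmem _ (hesmem ⟨m - 1, by omega⟩)).2.1
    omega
  -- real part
  rw [Real.le_logb_iff_rpow_le one_lt_phi (by positivity)]
  rw [Real.rpow_natCast]
  have hfib : ((1 + Real.sqrt 5) / 2) ^ (m - 1) ≤ (Nat.fib (m + 1) : ℝ) := by
    have := phi_fib (m - 1)
    rwa [show m - 1 + 2 = m + 1 by omega] at this
  have hpos : (0:ℝ) < ((1 + Real.sqrt 5) / 2) ^ (m - 1) := by positivity
  have hsplit : ((1 + Real.sqrt 5) / 2) ^ m
      = ((1 + Real.sqrt 5) / 2) ^ (m - 1) * ((1 + Real.sqrt 5) / 2) := by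
    rw [← pow_succ, show m - 1 + 1 = m by omega]
  have hcast : (2:ℝ) * (Nat.fib (m + 1) : ℝ) ≤ (n:ℝ) := by exact_mod_cast h2n
  calc ((1 + Real.sqrt 5) / 2) ^ m
      = ((1 + Real.sqrt 5) / 2) ^ (m - 1) * ((1 + Real.sqrt 5) / 2) := hsplit
    _ ≤ ((1 + Real.sqrt 5) / 2) ^ (m - 1) * 2 := by
        exact mul_le_mul_of_nonneg_left phi_le_two (le_of_lt hpos)
    _ ≤ (Nat.fib (m + 1) : ℝ) * 2 := by
        exact mul_le_mul_of_nonneg_right hfib (by norm_num)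
    _ ≤ (n:ℝ) := by linarith [hcast]

end Aux

open scoped Classical in
/-- For any string `x` of length `n ≥ 2`, the number of primitively rooted squares
that are prefixes of `x` (counted by the root length `p`, the root being `x[0..p)`)
is at most `log_φ n`, where `φ = (1+√5)/2`.  Consequently, the number of occurrences
of primitively rooted squares starting at any fixed position `i` of a string `w` of
length `n` is at most `log_φ n`. -/
theorem primitive_square_prefixes_le_log {α : Type*} (n : ℕ) (hn : 2 ≤ n) :
    (∀ x : List α, x.length = n →
      ((((Finset.Icc 1 n)).filter fun p =>
          IsPrimitiveWord (x.take p) ∧ (x.take p ++ x.take p) <+: x).card : ℝ)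
        ≤ Real.logb ((1 + Real.sqrt 5) / 2) n) ∧
    (∀ w : List α, w.length = n → ∀ i : ℕ,
      ((((Finset.Icc 1 n)).filter fun p =>
          i + 2 * p ≤ n ∧ IsPrimitiveWord ((w.drop i).take p) ∧
          (w.drop i).take p = (w.drop (i + p)).take p).card : ℝ)
        ≤ Real.logb ((1 + Real.sqrt 5) / 2) n) := by
  constructor
  · intro x hx
    refine le_trans ?_ (main_count x n hn (le_of_eq hx))
    have hsub : ((Finset.Icc 1 n).filter fun p =>
        IsPrimitiveWord (x.take p) ∧ (x.take p ++ x.take p) <+: x) ⊆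
        ((Finset.Icc 1 n).filter fun p =>
        2 * p ≤ x.length ∧ IsPrimitiveWord (x.take p) ∧ (x.take p ++ x.take p) <+: x) := by
      intro p hp
      rw [Finset.mem_filter, Finset.mem_Icc] at hp ⊢
      refine ⟨hp.1, ?_, hp.2⟩
      have h1 := hp.2.2.length_le
      rw [List.length_append, List.length_take] at h1
      omega
    exact_mod_cast Finset.card_le_card hsub
  · intro w hw i
    refine le_trans ?_ (main_count (w.drop i) n hn (by rw [List.length_drop]; omega))
    have hsub : ((Finset.Icc 1 n).filter fun p =>
        i + 2 * p ≤ n ∧ IsPrimitiveWord ((w.drop i).take p) ∧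
          (w.drop i).take p = (w.drop (i + p)).take p) ⊆
        ((Finset.Icc 1 n).filter fun p =>
        2 * p ≤ (w.drop i).length ∧ IsPrimitiveWord ((w.drop i).take p) ∧
          ((w.drop i).take p ++ (w.drop i).take p) <+: w.drop i) := by
      intro p hp
      rw [Finset.mem_filter, Finset.mem_Icc] at hp ⊢
      obtain ⟨hicc, h1, h2, h3⟩ := hp
      refine ⟨hicc, by rw [List.length_drop]; omega, h2, ?_⟩
      have hdd : (w.drop i).drop p = w.drop (i + p) := by
        rw [List.drop_drop, Nat.add_comm]
      have h3' : (w.drop i).take p = ((w.drop i).drop p).take p := by rw [hdd, h3]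
      refine ⟨((w.drop i).drop p).drop p, ?_⟩
      calc (w.drop i).take p ++ (w.drop i).take p ++ ((w.drop i).drop p).drop p
          = (w.drop i).take p ++ (((w.drop i).drop p).take p ++ ((w.drop i).drop p).drop p) := by
            rw [List.append_assoc, h3']
        _ = (w.drop i).take p ++ (w.drop i).drop p := by rw [List.take_append_drop]
        _ = w.drop i := List.take_append_drop p (w.drop i)
    exact_mod_cast Finset.card_le_card hsub
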